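/- arXiv:2509.14809 — 8 statements merged into one kernel-verified Lean document; each statement's English description precedes it below -/
import Mathlib

section
/- Let 0 < β < 1/2 and ρ_m, ρ_n > 0, and set z1 = 1 + (1-β)ρ_m/(β²ρ_n) and z2 = (1-2β)/(β²ρ_n). Then ∫_0^∞ ∫_0^∞ 1{(1 + βρ_n y/(ρ_m x + 1))·(1 + βρ_n y) ≤ 1 + ρ_n y} · e^{-(x+y)} dy dx = 1 − (1/z1)·e^{-z2}. -/
/-! For fixed `x > 0`, clearing denominators turns the event into a linear threshold
`y ≤ (z1 - 1) x + z2` on the opportunistic user's channel gain, so the inner integral is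
`e^{-x} - e^{-(z1 x + z2)}`; integrating in `x` gives `1 - e^{-z2} / z1`. -/

open MeasureTheory Real Set

lemma one_add_div_mul_one_add_le_iff {β ρ d y : ℝ} (hβ : β ≠ 0) (hρ : 0 < ρ) (hd : 0 < d)
    (hy : 0 < y) :
    (1 + β * ρ * y / d) * (1 + β * ρ * y) ≤ 1 + ρ * y ↔
      y ≤ ((1 - β) * d - β) / (β ^ 2 * ρ) := by
  have hρy : 0 < ρ * y := mul_pos hρ hy
  rw [le_div_iff₀ (by positivity), show 1 + β * ρ * y / d = (d + β * ρ * y) / d by field_simp,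
    div_mul_eq_mul_div, div_le_iff₀ hd]
  constructor <;> intro h <;> nlinarith

lemma setIntegral_Ioi_ite_le_exp_neg_add (a : ℝ) {c : ℝ} (hc : 0 ≤ c) :
    ∫ y in Ioi (0 : ℝ), (if y ≤ c then exp (-(a + y)) else 0) = exp (-a) - exp (-(a + c)) := by
  have hind : (fun y => if y ≤ c then exp (-(a + y)) else 0) =
      (Iic c).indicator (fun y => exp (-(a + y))) := by
    ext y; simp only [indicator_apply, mem_Iic]
  have hderiv (y : ℝ) : HasDerivAt (fun y => -exp (-(a + y))) (exp (-(a + y))) y := by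
    simpa using ((hasDerivAt_id' y).const_add a).fun_neg.exp.fun_neg
  rw [hind, setIntegral_indicator measurableSet_Iic, Ioi_inter_Iic,
    ← intervalIntegral.integral_of_le hc, intervalIntegral.integral_eq_sub_of_hasDerivAt
      (fun y _ => hderiv y) ((by fun_prop : Continuous _).intervalIntegrable _ _)]
  simp only [add_zero]
  ring

lemma integrableOn_exp_neg_mul_add_Ioi {k : ℝ} (hk : 0 < k) (b : ℝ) :
    IntegrableOn (fun x => exp (-(k * x + b))) (Ioi 0) := by
  simp_rw [neg_add, exp_add, ← neg_mul]
  exact (integrableOn_exp_mul_Ioi (neg_neg_of_pos hk) 0).mul_const _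

lemma integral_exp_neg_mul_add_Ioi {k : ℝ} (hk : 0 < k) (b : ℝ) :
    ∫ x in Ioi (0 : ℝ), exp (-(k * x + b)) = exp (-b) / k := by
  simp_rw [neg_add, exp_add, ← neg_mul]
  rw [integral_mul_const, integral_exp_mul_Ioi (neg_neg_of_pos hk)]
  field_simp
  simp

theorem fsic_failure_probability
    (β ρm ρn : ℝ) (hβ0 : 0 < β) (hβ1 : β < 1/2)
    (hρm : 0 < ρm) (hρn : 0 < ρn)
    (z1 z2 : ℝ)
    (hz1 : z1 = 1 + (1 - β) * ρm / (β ^ 2 * ρn))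
    (hz2 : z2 = (1 - 2 * β) / (β ^ 2 * ρn)) :
    (∫ x in Set.Ioi (0:ℝ), ∫ y in Set.Ioi (0:ℝ),
        (if (1 + β * ρn * y / (ρm * x + 1)) * (1 + β * ρn * y) ≤ 1 + ρn * y
          then Real.exp (-(x + y)) else 0))
      = 1 - (1 / z1) * Real.exp (-z2) := by
  have hb : 0 < β ^ 2 * ρn := by positivity
  have hz1_gt : 1 < z1 := by
    have : 0 < (1 - β) * ρm / (β ^ 2 * ρn) := div_pos (mul_pos (by linarith) hρm) hb
    linarith
  have hz2_pos : 0 < z2 := hz2 ▸ div_pos (by linarith) hb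
  have inner (x : ℝ) (hx : x ∈ Ioi 0) :
      ∫ y in Ioi (0 : ℝ), (if (1 + β * ρn * y / (ρm * x + 1)) * (1 + β * ρn * y) ≤ 1 + ρn * y
        then exp (-(x + y)) else 0) = exp (-x) - exp (-(z1 * x + z2)) := by
    rw [mem_Ioi] at hx
    have hthreshold : ((1 - β) * (ρm * x + 1) - β) / (β ^ 2 * ρn) = (z1 - 1) * x + z2 := by
      subst hz1 hz2; field_simp; ring
    have hc : 0 ≤ (z1 - 1) * x + z2 := by
      have := mul_pos (sub_pos.mpr hz1_gt) hx; positivity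
    rw [show z1 * x + z2 = x + ((z1 - 1) * x + z2) by ring,
      ← setIntegral_Ioi_ite_le_exp_neg_add x hc]
    refine setIntegral_congr_fun measurableSet_Ioi fun y hy => ?_
    have hd : 0 < ρm * x + 1 := by positivity
    simp only [one_add_div_mul_one_add_le_iff hβ0.ne' hρn hd (mem_Ioi.mp hy), hthreshold]
  rw [setIntegral_congr_fun measurableSet_Ioi inner,
    integral_sub (integrableOn_exp_neg_Ioi 0) (integrableOn_exp_neg_mul_add_Ioi (by linarith) _),
    integral_exp_neg_Ioi_zero, integral_exp_neg_mul_add_Ioi (by linarith)]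
  ring
end

section
/- Let 0 < β < 1/2, ρ_m, ρ_n > 0, α_m > 0 with α_m ρ_m < β/(1-β), and set z1 = 1 + (1-β)ρ_m/(β²ρ_n), z2 = (1-2β)/(β²ρ_n), z4 = 1 + 1/(α_m β ρ_n), z5 = (1-β)/(β/α_m − (1-β)ρ_m), Ψ(x) = ((1-β)(1+ρ_m x) − β)/(β²ρ_n), Φ(x) = (x/α_m − 1)/(βρ_n). Then ∫_{α_m}^{z5} ∫_{Φ(x)}^{Ψ(x)} e^{-(x+y)} dy dx = (1/z4)·e^{1/(βρ_n)}·(e^{-z4 α_m} − e^{-z4 z5}) − (1/z1)·e^{-z2}·(e^{-z1 α_m} − e^{-z1 z5}). -/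
open MeasureTheory Real

/-! The inner integral is `exp (-(x + Φ x)) - exp (-(x + Ψ x))`, and both exponents are affine
in `x`: `x + Φ x = z4 * x - 1 / (β * ρn)` and `x + Ψ x = z1 * x + z2`. The outer integral is then
that of two exponentials of affine functions, with slopes `z4, z1 > 0`. -/

theorem integral_exp_neg_mul {c : ℝ} (hc : c ≠ 0) (a b : ℝ) :
    ∫ x in a..b, exp (-(c * x)) = (exp (-(c * a)) - exp (-(c * b))) / c := by
  have h := intervalIntegral.integral_comp_mul_left (fun u => exp u) (neg_ne_zero.2 hc)
    (a := a) (b := b)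
  simp only [neg_mul, integral_exp, smul_eq_mul] at h
  rw [h]
  field_simp
  ring

theorem integral_exp_neg_add (x p q : ℝ) :
    ∫ y in p..q, exp (-(x + y)) = exp (-(x + p)) - exp (-(x + q)) := by
  rw [intervalIntegral.integral_comp_add_left (fun u => exp (-u))]
  simp only [intervalIntegral.integral_comp_neg, neg_add_rev, integral_exp]

theorem hsic_npa_P_II1_small_eps_general
    (β ρm ρn αm : ℝ) (hβ0 : 0 < β) (hβ1 : β < 1/2)
    (hρm : 0 < ρm) (hρn : 0 < ρn) (hαm : 0 < αm)
    (z1 z2 z4 z5 : ℝ) (Ψ Φ : ℝ → ℝ)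
    (hz1 : z1 = 1 + (1 - β) * ρm / (β ^ 2 * ρn))
    (hz2 : z2 = (1 - 2 * β) / (β ^ 2 * ρn))
    (hz4 : z4 = 1 + 1 / (αm * β * ρn))
    (hΨ : ∀ x, Ψ x = ((1 - β) * (1 + ρm * x) - β) / (β ^ 2 * ρn))
    (hΦ : ∀ x, Φ x = (x / αm - 1) / (β * ρn)) :
    (∫ x in αm..z5, ∫ y in (Φ x)..(Ψ x), Real.exp (-(x + y)))
      = (1 / z4) * Real.exp (1 / (β * ρn))
          * (Real.exp (-(z4 * αm)) - Real.exp (-(z4 * z5)))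
        - (1 / z1) * Real.exp (-z2)
          * (Real.exp (-(z1 * αm)) - Real.exp (-(z1 * z5))) := by
  have hz1_pos : 0 < z1 := by
    have : 0 < 1 - β := by linarith
    rw [hz1]; positivity
  have hz4_pos : 0 < z4 := by rw [hz4]; positivity
  have inner (x : ℝ) : ∫ y in (Φ x)..(Ψ x), exp (-(x + y))
      = exp (1 / (β * ρn)) * exp (-(z4 * x)) - exp (-z2) * exp (-(z1 * x)) := by
    rw [integral_exp_neg_add, ← exp_add, ← exp_add, hΦ, hΨ, hz4, hz1, hz2]
    ring_nf
  have hintegrable (c : ℝ) : IntervalIntegrable (fun x => exp (-(c * x))) volume αm z5 := by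
    apply Continuous.intervalIntegrable; fun_prop
  simp only [inner]
  rw [intervalIntegral.integral_sub ((hintegrable z4).const_mul _) ((hintegrable z1).const_mul _),
    intervalIntegral.integral_const_mul, intervalIntegral.integral_const_mul,
    integral_exp_neg_mul hz4_pos.ne', integral_exp_neg_mul hz1_pos.ne']
  ring

theorem hsic_npa_P_II1_small_eps
    (β ρm ρn αm : ℝ) (hβ0 : 0 < β) (hβ1 : β < 1/2)
    (hρm : 0 < ρm) (hρn : 0 < ρn) (hαm : 0 < αm)
    (hε : αm * ρm < β / (1 - β))
    (z1 z2 z4 z5 : ℝ) (Ψ Φ : ℝ → ℝ)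
    (hz1 : z1 = 1 + (1 - β) * ρm / (β ^ 2 * ρn))
    (hz2 : z2 = (1 - 2 * β) / (β ^ 2 * ρn))
    (hz4 : z4 = 1 + 1 / (αm * β * ρn))
    (hz5 : z5 = (1 - β) / (β / αm - (1 - β) * ρm))
    (hΨ : ∀ x, Ψ x = ((1 - β) * (1 + ρm * x) - β) / (β ^ 2 * ρn))
    (hΦ : ∀ x, Φ x = (x / αm - 1) / (β * ρn)) :
    (∫ x in αm..z5, ∫ y in (Φ x)..(Ψ x), Real.exp (-(x + y)))
      = (1 / z4) * Real.exp (1 / (β * ρn))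
          * (Real.exp (-(z4 * αm)) - Real.exp (-(z4 * z5)))
        - (1 / z1) * Real.exp (-z2)
          * (Real.exp (-(z1 * αm)) - Real.exp (-(z1 * z5))) :=
  hsic_npa_P_II1_small_eps_general β ρm ρn αm hβ0 hβ1 hρm hρn hαm z1 z2 z4 z5 Ψ Φ hz1 hz2 hz4 hΨ hΦ
end

section
/- Let 0 < β < 1/2, ρ_m, ρ_n > 0, ε_m > β/(1-β), and α_m = ε_m/ρ_m. Define τ(x) = max{0, x/α_m − 1} and the event E ⊆ [0,∞)² as the union of E_I = {(x,y) : βρ_n y ≤ τ(x) and (1+βρ_n y)² ≤ 1+ρ_n y} and E_II = {(x,y) : βρ_n y > τ(x) and (1 + βρ_n y/(ρ_m x + 1))(1+βρ_n y) ≤ 1+ρ_n y}. With z1 = 1 + (1-β)ρ_m/(β²ρ_n), z2 = (1-2β)/(β²ρ_n), z3 = (1-β)α_m/β, z4 = 1 + 1/(α_m β ρ_n), one has ∫∫_E e^{-(x+y)} dy dx = 1 − e^{-(z2+z3)} + (1/z4)·e^{1/(βρ_n)}·e^{-z3 z4} − (1/z1)·e^{-z2}. -/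
/-!
For fixed `x > 0` both SINR conditions are quadratic in `y` with a root at `0`, so `E_I` and
`E_II` cut out `y ≤ z2` and `y ≤ z2 + (z1 - 1) x` respectively. Hence the `y`-section of `E` is
`(0, z2 + (z1 - 1) x] \ (z2, τ(x) / (β ρ_n)]`, where the removed interval is nonempty exactly when
`x > z3`, and `ε_m > β / (1 - β)` keeps `τ(x) / (β ρ_n)` below `z2 + (z1 - 1) x`. What remains
are integrals of exponentials over intervals.
-/

open MeasureTheory Real Set

lemma integral_exp_neg_Ioc {a b : ℝ} (h : a ≤ b) :
    ∫ y in Ioc a b, exp (-y) = exp (-a) - exp (-b) := by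
  rw [← Ioi_sdiff_Ioi, setIntegral_sdiff measurableSet_Ioi (integrableOn_exp_neg_Ioi a)
    (Ioi_subset_Ioi h), integral_exp_neg_Ioi, integral_exp_neg_Ioi]

lemma integral_Ioi_ite_exp_neg_add {P : ℝ → Prop} [DecidablePred P] {x z u T : ℝ}
    (hP : ∀ y > 0, P y ↔ y ∈ Ioc 0 u \ Ioc z T) (hz : 0 ≤ z) (hzu : z ≤ u) (hTu : T ≤ u) :
    ∫ y in Ioi 0, (if P y then exp (-(x + y)) else 0)
      = exp (-x) * (1 - exp (-u) - ∫ y in Ioc z T, exp (-y)) := by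
  have hS : Ioc 0 u \ Ioc z T ⊆ Ioi 0 := sdiff_subset.trans Ioc_subset_Ioi_self
  calc ∫ y in Ioi 0, (if P y then exp (-(x + y)) else 0)
      = ∫ y in Ioi 0, (Ioc 0 u \ Ioc z T).indicator (fun y => exp (-x) * exp (-y)) y :=
        setIntegral_congr_fun measurableSet_Ioi fun y hy => by
          simp only [indicator_apply, hP y hy, neg_add, exp_add]
    _ = exp (-x) * ∫ y in Ioc 0 u \ Ioc z T, exp (-y) := by
        rw [setIntegral_indicator (measurableSet_Ioc.diff measurableSet_Ioc),
          inter_eq_right.mpr hS, integral_const_mul]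
    _ = exp (-x) * (1 - exp (-u) - ∫ y in Ioc z T, exp (-y)) := by
        rw [setIntegral_sdiff measurableSet_Ioc
          ((integrableOn_exp_neg_Ioi 0).mono_set Ioc_subset_Ioi_self) (Ioc_subset_Ioc hz hTu),
          integral_exp_neg_Ioc (hz.trans hzu), neg_zero, exp_zero]

lemma integral_Ioi_zero_exp_sub_indicator {b c s C D E : ℝ} (hb : 0 < b) (hc : 0 < c)
    (hs : 0 ≤ s) :
    ∫ x in Ioi 0, (exp (-x) - C * exp (-b * x)
        - (Ioi s).indicator (fun x => D * exp (-x) - E * exp (-c * x)) x)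
      = 1 - C / b - (D * exp (-s) - E * (exp (-c * s) / c)) := by
  have hexp : ∀ {k : ℝ}, 0 < k → ∀ t, IntegrableOn (fun x => exp (-k * x)) (Ioi t) :=
    fun hk => integrableOn_exp_mul_Ioi (neg_neg_iff_pos.mpr hk)
  have hCb : IntegrableOn (fun x => exp (-x) - C * exp (-b * x)) (Ioi 0) :=
    (integrableOn_exp_neg_Ioi 0).sub ((hexp hb 0).const_mul C)
  have hDE : IntegrableOn (fun x => D * exp (-x) - E * exp (-c * x)) (Ioi s) :=
    ((integrableOn_exp_neg_Ioi s).const_mul D).sub ((hexp hc s).const_mul E)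
  rw [integral_sub hCb (hDE.integrable_indicator measurableSet_Ioi).integrableOn,
    integral_sub (integrableOn_exp_neg_Ioi 0) ((hexp hb 0).const_mul C),
    setIntegral_indicator measurableSet_Ioi, Ioi_inter_Ioi, sup_of_le_right hs,
    integral_sub ((integrableOn_exp_neg_Ioi s).const_mul D) ((hexp hc s).const_mul E),
    integral_const_mul, integral_const_mul, integral_const_mul, integral_exp_neg_Ioi_zero,
    integral_exp_neg_Ioi, integral_exp_mul_Ioi (neg_neg_iff_pos.mpr hb),
    integral_exp_mul_Ioi (neg_neg_iff_pos.mpr hc)]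
  simp only [mul_zero, exp_zero, neg_div_neg_eq]
  ring

lemma one_add_mul_sq_le_iff {a ρ y : ℝ} (ha : 0 < a) (hy : 0 < y) :
    (1 + a * y) ^ 2 ≤ 1 + ρ * y ↔ y ≤ (ρ - 2 * a) / a ^ 2 := by
  rw [show (1 + a * y) ^ 2 = 1 + y * (2 * a + y * a ^ 2) by ring, mul_comm ρ,
    add_le_add_iff_left, mul_le_mul_iff_right₀ hy, le_div_iff₀ (by positivity)]
  constructor <;> intro h <;> linarith

lemma one_add_mul_div_mul_le_iff {a ρ P y : ℝ} (ha : 0 < a) (hP : 0 < P) (hy : 0 < y) :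
    (1 + a * y / P) * (1 + a * y) ≤ 1 + ρ * y ↔ y ≤ (P * (ρ - a) - a) / a ^ 2 := by
  have hexpand : P * ((1 + a * y / P) * (1 + a * y)) = P + y * (P * a + a + y * a ^ 2) := by
    field_simp; ring
  rw [← mul_le_mul_iff_right₀ hP, hexpand, show P * (1 + ρ * y) = P + y * (P * ρ) by ring,
    add_le_add_iff_left, mul_le_mul_iff_right₀ hy, le_div_iff₀ (by positivity)]
  constructor <;> intro h <;> linarith

lemma mul_le_and_le_or_gt_and_le_iff {a t y z u : ℝ} (ha : 0 < a) (hzu : z ≤ u) :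
    (a * y ≤ t ∧ y ≤ z) ∨ (a * y > t ∧ y ≤ u) ↔ y ≤ u ∧ ¬(z < y ∧ y ≤ t / a) := by
  rw [le_div_iff₀' ha]
  rcases le_or_gt (a * y) t with h | h
  · simp only [h, true_and, gt_iff_lt, not_lt.mpr h, false_and, or_false, and_true, not_lt]
    exact ⟨fun hy => ⟨hy.trans hzu, hy⟩, And.right⟩
  · simp only [not_le.mpr h, false_and, gt_iff_lt, h, true_and, false_or, and_false,
      not_false_eq_true, and_true]

lemma hsic_event_iff {β ρm ρn z1 z2 t x y : ℝ} (hβ0 : 0 < β) (hρm : 0 ≤ ρm) (hρn : 0 < ρn)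
    (hz1 : z1 = 1 + (1 - β) * ρm / (β ^ 2 * ρn)) (hz2 : z2 = (1 - 2 * β) / (β ^ 2 * ρn))
    (hz1_le : 1 ≤ z1) (hx : 0 ≤ x) (hy : 0 < y) :
    (β * ρn * y ≤ t ∧ (1 + β * ρn * y) ^ 2 ≤ 1 + ρn * y)
        ∨ (β * ρn * y > t ∧ (1 + β * ρn * y / (ρm * x + 1)) * (1 + β * ρn * y) ≤ 1 + ρn * y)
      ↔ y ∈ Ioc 0 (z2 + (z1 - 1) * x) \ Ioc z2 (t / (β * ρn)) := by
  have ha : 0 < β * ρn := by positivity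
  have hI : (ρn - 2 * (β * ρn)) / (β * ρn) ^ 2 = z2 := by
    subst hz2; field_simp
  have hII : ((ρm * x + 1) * (ρn - β * ρn) - β * ρn) / (β * ρn) ^ 2 = z2 + (z1 - 1) * x := by
    subst hz1 hz2; field_simp; ring
  rw [one_add_mul_sq_le_iff ha hy, one_add_mul_div_mul_le_iff ha (by positivity) hy, hI, hII,
    mul_le_and_le_or_gt_and_le_iff ha (le_add_of_nonneg_right (mul_nonneg (sub_nonneg.mpr hz1_le) hx))]
  simp only [mem_sdiff, mem_Ioc, hy, true_and]

lemma threshold_le_edge {β ρm ρn αm z1 z2 x : ℝ} (hβ0 : 0 < β) (hβ1 : β ≤ 1 / 2)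
    (hρm : 0 ≤ ρm) (hρn : 0 < ρn) (hα : 0 < αm) (hε : β / (1 - β) ≤ αm * ρm)
    (hz1 : z1 = 1 + (1 - β) * ρm / (β ^ 2 * ρn)) (hz2 : z2 = (1 - 2 * β) / (β ^ 2 * ρn))
    (hx : 0 ≤ x) :
    max 0 (x / αm - 1) / (β * ρn) ≤ z2 + (z1 - 1) * x := by
  have h1β : 0 < 1 - β := by linarith
  have hedge : (z2 + (z1 - 1) * x) * (β * ρn) = (1 - 2 * β) / β + (1 - β) * ρm * x / β := by
    subst hz1 hz2; field_simp; ring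
  have hx_div : x / αm ≤ (1 - β) * ρm * x / β := by
    rw [div_le_div_iff₀ hα hβ0]
    have := (div_le_iff₀ h1β).mp hε
    nlinarith
  have hone : -1 ≤ (1 - 2 * β) / β := by rw [le_div_iff₀ hβ0]; linarith
  rw [div_le_iff₀ (by positivity), hedge, max_le_iff]
  constructor
  · have : 0 ≤ 1 - 2 * β := by linarith
    positivity
  · linarith

lemma exp_neg_mul_integral_Ioc_threshold {β ρn αm z2 z3 z4 : ℝ} (hβ0 : 0 < β)
    (hβ1 : β ≤ 1 / 2) (hρn : 0 < ρn) (hα : 0 < αm) (hz2 : z2 = (1 - 2 * β) / (β ^ 2 * ρn))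
    (hz3 : z3 = (1 - β) * αm / β) (hz4 : z4 = 1 + 1 / (αm * β * ρn)) (x : ℝ) :
    exp (-x) * ∫ y in Ioc z2 (max 0 (x / αm - 1) / (β * ρn)), exp (-y)
      = (Ioi z3).indicator
          (fun x => exp (-z2) * exp (-x) - exp (1 / (β * ρn)) * exp (-z4 * x)) x := by
  have ha : 0 < β * ρn := by positivity
  have hz2' : z2 = (z3 / αm - 1) / (β * ρn) := by subst hz2 hz3; field_simp; ring
  have hαz3 : αm ≤ z3 := by rw [hz3, le_div_iff₀ hβ0]; nlinarith
  have hz3_div : 1 ≤ z3 / αm := by rwa [le_div_iff₀ hα, one_mul]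
  rcases le_or_gt x z3 with hx | hx
  · rw [indicator_of_notMem (notMem_Ioi.mpr hx), Ioc_eq_empty, Measure.restrict_empty,
      integral_zero_measure, mul_zero]
    rw [not_lt, hz2', div_le_div_iff_of_pos_right ha, max_le_iff]
    exact ⟨by linarith, by gcongr⟩
  · have hx1 : 0 ≤ x / αm - 1 := by
      rw [sub_nonneg]; exact hz3_div.trans (by gcongr)
    have hexp : -x + -((x / αm - 1) / (β * ρn)) = 1 / (β * ρn) + -z4 * x := by
      subst hz4; field_simp; ring
    rw [indicator_of_mem (mem_Ioi.mpr hx), max_eq_right hx1,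
      integral_exp_neg_Ioc (by rw [hz2']; gcongr), mul_sub, ← exp_add, ← exp_add, ← exp_add,
      ← exp_add, hexp, add_comm (-x)]

theorem hsic_npa_theorem1_large_eps
    (β ρm ρn εm αm : ℝ) (hβ0 : 0 < β) (hβ1 : β < 1/2)
    (hρm : 0 < ρm) (hρn : 0 < ρn)
    (hε : εm > β / (1 - β)) (hαm : αm = εm / ρm)
    (τ : ℝ → ℝ) (hτ : ∀ x, τ x = max 0 (x / αm - 1))
    (z1 z2 z3 z4 : ℝ)
    (hz1 : z1 = 1 + (1 - β) * ρm / (β ^ 2 * ρn))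
    (hz2 : z2 = (1 - 2 * β) / (β ^ 2 * ρn))
    (hz3 : z3 = (1 - β) * αm / β)
    (hz4 : z4 = 1 + 1 / (αm * β * ρn)) :
    (∫ x in Set.Ioi (0:ℝ), ∫ y in Set.Ioi (0:ℝ),
        (if (β * ρn * y ≤ τ x ∧ (1 + β * ρn * y) ^ 2 ≤ 1 + ρn * y)
            ∨ (β * ρn * y > τ x ∧
                (1 + β * ρn * y / (ρm * x + 1)) * (1 + β * ρn * y) ≤ 1 + ρn * y)
          then Real.exp (-(x + y)) else 0))
      = 1 - Real.exp (-(z2 + z3))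
        + (1 / z4) * Real.exp (1 / (β * ρn)) * Real.exp (-(z3 * z4))
        - (1 / z1) * Real.exp (-z2) := by
  have h1β : 0 < 1 - β := by linarith
  have hαρ : β / (1 - β) ≤ αm * ρm := by rw [hαm, div_mul_cancel₀ _ hρm.ne']; exact hε.le
  have hα : 0 < αm := pos_of_mul_pos_left ((div_pos hβ0 h1β).trans_le hαρ) hρm.le
  have hz1_le : 1 ≤ z1 := by rw [hz1, le_add_iff_nonneg_right]; positivity
  have h12β : 0 ≤ 1 - 2 * β := by linarith
  have hz2_nonneg : 0 ≤ z2 := by rw [hz2]; positivity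
  rw [setIntegral_congr_fun measurableSet_Ioi (g := fun x => exp (-x) - exp (-z2) * exp (-z1 * x)
      - (Ioi z3).indicator (fun x => exp (-z2) * exp (-x) - exp (1 / (β * ρn)) * exp (-z4 * x)) x)
      fun x hx => ?_]
  · rw [integral_Ioi_zero_exp_sub_indicator (by linarith) (by rw [hz4]; positivity)
      (by rw [hz3]; positivity), neg_add, exp_add,
      show -z4 * z3 = -(z3 * z4) by ring]
    ring
  · simp only [hτ]
    rw [integral_Ioi_ite_exp_neg_add (fun y hy => hsic_event_iff hβ0 hρm.le hρn hz1 hz2 hz1_le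
        hx.le hy) hz2_nonneg (le_add_of_nonneg_right (mul_nonneg (by linarith) hx.le))
        (threshold_le_edge hβ0 hβ1.le hρm.le hρn hα hαρ hz1 hz2 hx.le), mul_sub, mul_sub,
      mul_one, exp_neg_mul_integral_Ioc_threshold hβ0 hβ1.le hρn hα hz2 hz3 hz4, ← exp_add,
      show -x + -(z2 + (z1 - 1) * x) = -z2 + -z1 * x by ring, exp_add]
end

section
/- Let 0 < β < 1/2, ρ_m, ρ_n > 0, 0 < ε_m < β/(1-β), and α_m = ε_m/ρ_m. Define τ(x) = max{0, x/α_m − 1} and the event E ⊆ [0,∞)² as the union of E_I = {(x,y) : βρ_n y ≤ τ(x) and (1+βρ_n y)² ≤ 1+ρ_n y} and E_II = {(x,y) : βρ_n y > τ(x) and (1 + βρ_n y/(ρ_m x + 1))(1+βρ_n y) ≤ 1+ρ_n y}. With z1 = 1 + (1-β)ρ_m/(β²ρ_n), z2 = (1-2β)/(β²ρ_n), z3 = (1-β)α_m/β, z4 = 1 + 1/(α_m β ρ_n), z5 = (1-β)/(β/α_m − (1-β)ρ_m), and V = 1 − e^{-(z2+z3)} + (1/z4)·e^{1/(βρ_n)}·e^{-z3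 z4} − (1/z1)·e^{-z2}, one has ∫∫_E e^{-(x+y)} dy dx = V − (1/z4)·e^{1/(βρ_n) − z4 z5} + (1/z1)·e^{-(z2 + z1 z5)}. -/
/-!
For fixed `x > 0` both rate conditions are linear in `y`, so the section of the event at `x` is
`{y ≤ min t z2} ∪ {t < y ≤ z2 + (z1 - 1) x}` with threshold `t = τ x / (β ρn)`, which is
`max 0 ((z4 - 1) x - 1 / (β ρn))`. The inner integral is then explicit, and the outer one splits
at `z3`, where `t` crosses `z2`, and at `z5`, where it crosses `z2 + (z1 - 1) x`; on each piece
the integrand is a combination of exponentials of affine functions of `x`.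
-/

open MeasureTheory Real Set

theorem integral_exp_sub_mul_Ioc (d : ℝ) {k u v : ℝ} (hk : k ≠ 0) (huv : u ≤ v) :
    ∫ x in Ioc u v, exp (d - k * x) = (exp (d - k * u) - exp (d - k * v)) / k := by
  rw [← intervalIntegral.integral_of_le huv,
    intervalIntegral.integral_comp_sub_mul (fun x => exp x) hk, integral_exp, smul_eq_mul]
  ring

theorem integral_exp_neg_Ioc_s9 (u v : ℝ) :
    ∫ x in Ioc u v, exp (-x) = exp (-u) - exp (-max u v) := by
  rcases le_total u v with h | h
  · simpa [max_eq_right h] using integral_exp_sub_mul_Ioc 0 one_ne_zero h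
  · simp [Ioc_eq_empty_of_le h, max_eq_left h]

theorem integrable_indicator_Ioc_exp_neg (u v : ℝ) :
    Integrable ((Ioc u v).indicator fun y => exp (-y)) :=
  (integrable_indicator_iff measurableSet_Ioc).2
    (by fun_prop : Continuous fun y => exp (-y)).integrableOn_Ioc

theorem setIntegral_Ioi_ite_exp_neg_add {s p : ℝ} (hs : 0 ≤ s) (hp : 0 ≤ p) (x q : ℝ) :
    ∫ y in Ioi 0, (if (y ≤ s ∧ y ≤ p) ∨ (s < y ∧ y ≤ q) then exp (-(x + y)) else 0)
      = exp (-x) * (1 - exp (-min s p) + (exp (-s) - exp (-max s q))) := by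
  have hsplit : EqOn (fun y => if (y ≤ s ∧ y ≤ p) ∨ (s < y ∧ y ≤ q) then exp (-(x + y)) else 0)
      (fun y => exp (-x) * ((Ioc 0 (min s p)).indicator (fun y => exp (-y)) y
        + (Ioc s q).indicator (fun y => exp (-y)) y)) (Ioi 0) := by
    intro y hy
    rw [mem_Ioi] at hy
    simp only [indicator_apply, mem_Ioc, le_min_iff, neg_add, exp_add]
    split_ifs <;> grind
  rw [setIntegral_congr_fun measurableSet_Ioi hsplit, integral_const_mul,
    integral_add (integrable_indicator_Ioc_exp_neg _ _).integrableOn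
      (integrable_indicator_Ioc_exp_neg _ _).integrableOn,
    setIntegral_indicator measurableSet_Ioc, setIntegral_indicator measurableSet_Ioc,
    inter_eq_self_of_subset_right Ioc_subset_Ioi_self,
    inter_eq_self_of_subset_right (Ioc_subset_Ioi_self.trans (Ioi_subset_Ioi hs)),
    integral_exp_neg_Ioc_s9, integral_exp_neg_Ioc_s9, max_eq_right (le_min hs hp), neg_zero, exp_zero]

/-- The integral of `exp (-(x + y))` over `{0 < y ≤ min t p} ∪ {t < y ≤ p + c * x}` with
`t = max 0 (a * x - b)`, as computed by `setIntegral_Ioi_ite_exp_neg_add`. -/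
noncomputable def sliceMass (a b c p x : ℝ) : ℝ :=
  exp (-x) * (1 - exp (-min (max 0 (a * x - b)) p)
    + (exp (-max 0 (a * x - b)) - exp (-max (max 0 (a * x - b)) (p + c * x))))

section SliceMass

variable {a b c p x : ℝ}

theorem continuous_sliceMass : Continuous (sliceMass a b c p) := by
  unfold sliceMass; fun_prop

theorem sliceMass_of_le (hp : 0 ≤ p) (hc : 0 ≤ c) (hx : 0 ≤ x) (h : a * x - b ≤ p) :
    sliceMass a b c p x = exp (-x) - exp (-p - (1 + c) * x) := by
  have hs : max 0 (a * x - b) ≤ p := max_le hp h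
  have hsq : max 0 (a * x - b) ≤ p + c * x := hs.trans (by nlinarith)
  have he : exp (-p - (1 + c) * x) = exp (-x) * exp (-(p + c * x)) := by
    rw [← exp_add]; congr 1; ring
  rw [sliceMass, min_eq_left hs, max_eq_right hsq, he]
  ring

theorem sliceMass_of_le_of_le (hp : 0 ≤ p) (h₁ : p ≤ a * x - b) (h₂ : a * x - b ≤ p + c * x) :
    sliceMass a b c p x
      = exp (-x) * (1 - exp (-p)) + (exp (b - (1 + a) * x) - exp (-p - (1 + c) * x)) := by
  have hs : max 0 (a * x - b) = a * x - b := max_eq_right (hp.trans h₁)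
  have he₁ : exp (b - (1 + a) * x) = exp (-x) * exp (-(a * x - b)) := by
    rw [← exp_add]; congr 1; ring
  have he₂ : exp (-p - (1 + c) * x) = exp (-x) * exp (-(p + c * x)) := by
    rw [← exp_add]; congr 1; ring
  rw [sliceMass, hs, min_eq_right h₁, max_eq_right h₂, he₁, he₂]
  ring

theorem sliceMass_of_le_of_ge (hp : 0 ≤ p) (h₁ : p ≤ a * x - b) (h₂ : p + c * x ≤ a * x - b) :
    sliceMass a b c p x = exp (-x) * (1 - exp (-p)) := by
  have hs : max 0 (a * x - b) = a * x - b := max_eq_right (hp.trans h₁)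
  rw [sliceMass, hs, min_eq_right h₁, max_eq_left h₂]
  ring

theorem integral_sliceMass (hp : 0 ≤ p) (hb : 0 ≤ b) (hc : 0 ≤ c) (hca : c < a)
    {z₃ z₅ : ℝ} (hz₃ : a * z₃ = p + b) (hz₅ : (a - c) * z₅ = p + b) :
    ∫ x in Ioi 0, sliceMass a b c p x
      = 1 - exp (-(p + z₃)) + 1 / (1 + a) * exp (b - (1 + a) * z₃) - 1 / (1 + c) * exp (-p)
        - 1 / (1 + a) * exp (b - (1 + a) * z₅) + 1 / (1 + c) * exp (-(p + (1 + c) * z₅)) := by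
  have ha : 0 < a := hc.trans_lt hca
  have hz₃0 : 0 ≤ z₃ := by nlinarith
  have hz₃₅ : z₃ ≤ z₅ := by nlinarith
  have hI₃ : IntegrableOn (sliceMass a b c p) (Ioi z₅) :=
    IntegrableOn.congr_fun ((integrableOn_exp_neg_Ioi z₅).mul_const (1 - exp (-p)))
      (fun x hx => (sliceMass_of_le_of_ge hp (by nlinarith [mem_Ioi.1 hx])
        (by nlinarith [mem_Ioi.1 hx])).symm) measurableSet_Ioi
  have hI₂₃ : IntegrableOn (sliceMass a b c p) (Ioi z₃) :=
    Ioc_union_Ioi_eq_Ioi hz₃₅ ▸ continuous_sliceMass.integrableOn_Ioc.union hI₃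
  rw [← Ioc_union_Ioi_eq_Ioi hz₃0, setIntegral_union Ioc_disjoint_Ioi_same measurableSet_Ioi
      continuous_sliceMass.integrableOn_Ioc hI₂₃, ← Ioc_union_Ioi_eq_Ioi hz₃₅,
    setIntegral_union Ioc_disjoint_Ioi_same measurableSet_Ioi
      continuous_sliceMass.integrableOn_Ioc hI₃]
  rw [setIntegral_congr_fun measurableSet_Ioc fun x hx =>
      sliceMass_of_le hp hc hx.1.le (by nlinarith [hx.2]),
    setIntegral_congr_fun measurableSet_Ioc fun x hx =>
      sliceMass_of_le_of_le hp (by nlinarith [hx.1]) (by nlinarith [hx.2]),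
    setIntegral_congr_fun measurableSet_Ioi fun x hx =>
      sliceMass_of_le_of_ge hp (by nlinarith [mem_Ioi.1 hx]) (by nlinarith [mem_Ioi.1 hx])]
  rw [integral_sub, integral_add, integral_sub, integral_mul_const, integral_mul_const,
    integral_exp_neg_Ioc_s9, integral_exp_neg_Ioc_s9, integral_exp_neg_Ioi,
    integral_exp_sub_mul_Ioc _ (by positivity) hz₃0,
    integral_exp_sub_mul_Ioc _ (by positivity) hz₃₅,
    integral_exp_sub_mul_Ioc _ (by positivity) hz₃₅]
  · simp only [max_eq_right hz₃0, max_eq_right hz₃₅, mul_zero, sub_zero, neg_zero, exp_zero,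
      neg_add', exp_sub, exp_neg]
    ring
  all_goals exact Continuous.integrableOn_Ioc (by fun_prop)

end SliceMass

section Rates

variable {β ρn y : ℝ}

theorem sq_one_add_mul_le_one_add_mul_iff (hβ : 0 < β) (hρn : 0 < ρn) (hy : 0 < y) :
    (1 + β * ρn * y) ^ 2 ≤ 1 + ρn * y ↔ y ≤ (1 - 2 * β) / (β ^ 2 * ρn) := by
  have hfactor :
      1 + ρn * y - (1 + β * ρn * y) ^ 2 = ρn * y * (1 - 2 * β - y * (β ^ 2 * ρn)) := by
    ring
  rw [← sub_nonneg, hfactor, mul_nonneg_iff_of_pos_left (by positivity), sub_nonneg,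
    le_div_iff₀ (by positivity)]

theorem one_add_div_mul_le_one_add_mul_iff {d : ℝ} (hβ : 0 < β) (hρn : 0 < ρn) (hd : 0 < d)
    (hy : 0 < y) :
    (1 + β * ρn * y / d) * (1 + β * ρn * y) ≤ 1 + ρn * y ↔
      y ≤ ((1 - β) * d - β) / (β ^ 2 * ρn) := by
  have hfactor : 1 + ρn * y - (1 + β * ρn * y / d) * (1 + β * ρn * y)
      = ρn * y * ((1 - β) * d - β - y * (β ^ 2 * ρn)) / d := by
    field_simp; ring
  rw [← sub_nonneg, hfactor, le_div_iff₀ hd, zero_mul, mul_nonneg_iff_of_pos_left (by positivity),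
    sub_nonneg, le_div_iff₀ (by positivity)]

theorem hsic_npa_event_iff {ρm x : ℝ} (T : ℝ) (hβ : 0 < β) (hρm : 0 ≤ ρm) (hρn : 0 < ρn)
    (hx : 0 ≤ x) (hy : 0 < y) :
    ((β * ρn * y ≤ T ∧ (1 + β * ρn * y) ^ 2 ≤ 1 + ρn * y) ∨
      (β * ρn * y > T ∧ (1 + β * ρn * y / (ρm * x + 1)) * (1 + β * ρn * y) ≤ 1 + ρn * y)) ↔
    ((y ≤ T / (β * ρn) ∧ y ≤ (1 - 2 * β) / (β ^ 2 * ρn)) ∨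
      (T / (β * ρn) < y ∧ y ≤ (1 - 2 * β) / (β ^ 2 * ρn) + (1 - β) * ρm / (β ^ 2 * ρn) * x)) := by
  have hβρn : 0 < β * ρn := mul_pos hβ hρn
  have hline : ((1 - β) * (ρm * x + 1) - β) / (β ^ 2 * ρn)
      = (1 - 2 * β) / (β ^ 2 * ρn) + (1 - β) * ρm / (β ^ 2 * ρn) * x := by
    ring
  rw [le_div_iff₀' hβρn, div_lt_iff₀' hβρn, gt_iff_lt, sq_one_add_mul_le_one_add_mul_iff hβ hρn hy,
    one_add_div_mul_le_one_add_mul_iff hβ hρn (by positivity) hy, hline]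

end Rates

theorem hsic_npa_theorem1_small_eps
    (β ρm ρn εm αm : ℝ) (hβ0 : 0 < β) (hβ1 : β < 1/2)
    (hρm : 0 < ρm) (hρn : 0 < ρn)
    (hε0 : 0 < εm) (hε : εm < β / (1 - β)) (hαm : αm = εm / ρm)
    (τ : ℝ → ℝ) (hτ : ∀ x, τ x = max 0 (x / αm - 1))
    (z1 z2 z3 z4 z5 V : ℝ)
    (hz1 : z1 = 1 + (1 - β) * ρm / (β ^ 2 * ρn))
    (hz2 : z2 = (1 - 2 * β) / (β ^ 2 * ρn))
    (hz3 : z3 = (1 - β) * αm / β)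
    (hz4 : z4 = 1 + 1 / (αm * β * ρn))
    (hz5 : z5 = (1 - β) / (β / αm - (1 - β) * ρm))
    (hV : V = 1 - Real.exp (-(z2 + z3))
        + (1 / z4) * Real.exp (1 / (β * ρn)) * Real.exp (-(z3 * z4))
        - (1 / z1) * Real.exp (-z2)) :
    (∫ x in Set.Ioi (0:ℝ), ∫ y in Set.Ioi (0:ℝ),
        (if (β * ρn * y ≤ τ x ∧ (1 + β * ρn * y) ^ 2 ≤ 1 + ρn * y)
            ∨ (β * ρn * y > τ x ∧
                (1 + β * ρn * y / (ρm * x + 1)) * (1 + β * ρn * y) ≤ 1 + ρn * y)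
          then Real.exp (-(x + y)) else 0))
      = V - (1 / z4) * Real.exp (1 / (β * ρn) - z4 * z5)
        + (1 / z1) * Real.exp (-(z2 + z1 * z5)) := by
  have hα : 0 < αm := hαm ▸ div_pos hε0 hρm
  have hβρn : 0 < β * ρn := mul_pos hβ0 hρn
  have hκ : 0 < β - (1 - β) * ρm * αm := by
    have : (1 - β) * ρm * αm = εm * (1 - β) := by rw [hαm]; field_simp
    linarith [(lt_div_iff₀ (by linarith : (0:ℝ) < 1 - β)).1 hε]
  have hp : 0 ≤ z2 := hz2 ▸ div_nonneg (by linarith) (by positivity)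
  have hz1c : (1 - β) * ρm / (β ^ 2 * ρn) = z1 - 1 := by rw [hz1]; ring
  have hc : 0 ≤ z1 - 1 := hz1c ▸ div_nonneg (mul_nonneg (by linarith) hρm.le) (by positivity)
  have hslope : (z4 - 1) - (z1 - 1) = (β - (1 - β) * ρm * αm) / (αm * β ^ 2 * ρn) := by
    rw [hz1, hz4]; field_simp; ring
  have hz3' : (z4 - 1) * z3 = z2 + 1 / (β * ρn) := by rw [hz4, hz3, hz2]; field_simp; ring
  have hz5' : ((z4 - 1) - (z1 - 1)) * z5 = z2 + 1 / (β * ρn) := by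
    have hD : β / αm - (1 - β) * ρm = (β - (1 - β) * ρm * αm) / αm := by field_simp
    rw [hslope, hz5, hD, hz2]; field_simp; ring
  have hthreshold : ∀ x, τ x / (β * ρn) = max 0 ((z4 - 1) * x - 1 / (β * ρn)) := by
    intro x
    rw [hτ, ← max_div_div_right hβρn.le, zero_div, hz4]
    congr 1; field_simp; ring
  calc _ = ∫ x in Ioi 0, sliceMass (z4 - 1) (1 / (β * ρn)) (z1 - 1) z2 x := by
        refine setIntegral_congr_fun measurableSet_Ioi fun x hx => ?_
        rw [sliceMass, ← setIntegral_Ioi_ite_exp_neg_add (le_max_left _ _) hp]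
        refine setIntegral_congr_fun measurableSet_Ioi fun y hy => if_congr ?_ rfl rfl
        rw [hsic_npa_event_iff (τ x) hβ0 hρm.le hρn (le_of_lt hx) hy, hthreshold, ← hz2, hz1c]
    _ = _ := by
      rw [integral_sliceMass hp (by positivity) hc (sub_pos.1 (hslope ▸ div_pos hκ (by positivity)))
          hz3' hz5', add_sub_cancel, add_sub_cancel, hV, sub_eq_add_neg _ (z4 * z3), exp_add,
        mul_comm z4 z3]
      ring
end

section
/- Let 0 < β < 1/2, η > 0, and ε_m > β/(1-β). For ρ > 0 set ρ_n = ρ, ρ_m = ρ/η, α_m = ε_m/ρ_m, τ(x) = max{0, x/α_m − 1}, and let P̃(ρ) = ∫∫_E e^{-(x+y)} dy dx, where E ⊆ [0,∞)² is the union of {(x,y) : βρ_n y ≤ τ(x), (1+βρ_n y)² ≤ 1+ρ_n y} and {(x,y) : βρ_n y > τ(x), (1 + βρ_n y/(ρ_m x + 1))(1+βρ_n y) ≤ 1+ρ_n y}. Then P̃(ρ) tends to E_r = 1/(1 + 1/(β ε_m η)) − 1/(1 + (1-β)/(β² η)) as ρ → ∞. -/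
/-!
For fixed `x, y > 0` off the two lines `y = a x` and `y = b x`, where `a = 1 / (β εm η)` and
`b = (1 - β) / (β² η)`, membership of `(x, y)` in the region stabilises as `ρ → ∞`: the first
branch needs `ρ β² y ≤ 1 - 2β` and eventually fails, the threshold comparison of the second branch
reduces to `a x < y`, and its rate comparison to `ρ (β² η y - (1 - β) x) ≤ (1 - 2β) η`, i.e.
eventually to `y < b x`. Dominated convergence (the lines are null) turns this into convergence
of the integrals to the integral of `e^{-(x+y)}` over the wedge `a x < y < b x`, which is
`1 / (1 + a) - 1 / (1 + b)`.
-/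

open MeasureTheory Real Filter Set Topology

theorem tendsto_integral_indicator_of_ae_eventually_mem_iff {α ι E : Type*} [MeasurableSpace α]
    [NormedAddCommGroup E] [NormedSpace ℝ E] {μ : Measure α} {l : Filter ι}
    [l.IsCountablyGenerated] {g : α → E} {S : ι → Set α} {T : Set α} (hg : Integrable g μ)
    (hS : ∀ i, MeasurableSet (S i)) (hST : ∀ᵐ p ∂μ, ∀ᶠ i in l, (p ∈ S i ↔ p ∈ T)) :
    Tendsto (fun i => ∫ p, (S i).indicator g p ∂μ) l (𝓝 (∫ p, T.indicator g p ∂μ)) := by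
  refine tendsto_integral_filter_of_dominated_convergence (fun p => ‖g p‖)
    (Eventually.of_forall fun i => hg.aestronglyMeasurable.indicator (hS i))
    (Eventually.of_forall fun _ => ae_of_all _ fun _ => norm_indicator_le_norm_self _ _) hg.norm ?_
  filter_upwards [hST] with p hp
  refine tendsto_const_nhds.congr' ?_
  filter_upwards [hp] with i hi
  by_cases h : p ∈ T <;> simp [h, hi]

lemma volume_setOf_snd_eq_mul_fst (c : ℝ) : volume {p : ℝ × ℝ | p.2 = c * p.1} = 0 := by
  rw [Measure.volume_eq_prod,
    Measure.measure_prod_null (measurableSet_eq_fun (by fun_prop) (by fun_prop))]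
  exact ae_of_all _ fun x => by simp

lemma integrableOn_exp_neg_add :
    IntegrableOn (fun p : ℝ × ℝ => exp (-(p.1 + p.2))) (Ioi 0 ×ˢ Ioi 0) := by
  have h := exp_neg_integrableOn_Ioi 0 one_pos
  rw [IntegrableOn, Measure.volume_eq_prod, ← Measure.prod_restrict]
  simpa [neg_add, exp_add, mul_comm] using h.mul_prod h

lemma integral_Ioo_exp_neg_add (x : ℝ) {u v : ℝ} (huv : u ≤ v) :
    ∫ y in Ioo u v, exp (-(x + y)) = exp (-(x + u)) - exp (-(x + v)) := by
  rw [← integral_Ioc_eq_integral_Ioo, ← intervalIntegral.integral_of_le huv,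
    intervalIntegral.integral_comp_add_left (fun z => exp (-z)),
    intervalIntegral.integral_comp_neg (fun z => exp z), integral_exp]

lemma setIntegral_indicator_wedge_exp_neg_add {a b : ℝ} (ha : 0 ≤ a) (hab : a ≤ b) :
    ∫ p in Ioi (0:ℝ) ×ˢ Ioi (0:ℝ), {p : ℝ × ℝ | a * p.1 < p.2 ∧ p.2 < b * p.1}.indicator
      (fun p => exp (-(p.1 + p.2))) p = 1 / (1 + a) - 1 / (1 + b) := by
  have hW : MeasurableSet {p : ℝ × ℝ | a * p.1 < p.2 ∧ p.2 < b * p.1} :=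
    measurableSet_setOfPred.2 (by fun_prop)
  have hslice : ∀ x ∈ Ioi (0:ℝ), ∫ y in Ioi 0,
      {p : ℝ × ℝ | a * p.1 < p.2 ∧ p.2 < b * p.1}.indicator (fun p => exp (-(p.1 + p.2))) (x, y)
        = exp (-(1 + a) * x) - exp (-(1 + b) * x) := by
    intro x hx
    have hsub : Ioo (a * x) (b * x) ⊆ Ioi 0 := fun y hy => (mul_nonneg ha hx.le).trans_lt hy.1
    calc _ = ∫ y in Ioi 0, (Ioo (a * x) (b * x)).indicator (fun y => exp (-(x + y))) y := rfl
      _ = ∫ y in Ioo (a * x) (b * x), exp (-(x + y)) := by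
        rw [integral_indicator measurableSet_Ioo, Measure.restrict_restrict measurableSet_Ioo,
          inter_eq_left.2 hsub]
      _ = _ := by
        rw [integral_Ioo_exp_neg_add x (mul_le_mul_of_nonneg_right hab hx.le)]
        ring_nf
  have hexp : ∀ c : ℝ, 0 < c → ∫ x in Ioi (0:ℝ), exp (-c * x) = 1 / c := fun c hc => by
    rw [integral_exp_mul_Ioi (by linarith) 0]
    field_simp
    simp
  have hint : ∀ c : ℝ, 0 < c → IntegrableOn (fun x => exp (-c * x)) (Ioi 0) := fun c hc =>
    integrableOn_exp_mul_Ioi (by linarith) 0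
  rw [Measure.volume_eq_prod, setIntegral_prod _ (integrableOn_exp_neg_add.indicator hW),
    setIntegral_congr_fun measurableSet_Ioi hslice, integral_sub (hint _ (by linarith))
      (hint _ (by linarith)), hexp _ (by linarith), hexp _ (by linarith)]

lemma eventually_mul_le_iff_neg {C D : ℝ} (hD : 0 < D) (hC : C ≠ 0) :
    ∀ᶠ ρ in atTop, (ρ * C ≤ D ↔ C < 0) := by
  rcases hC.lt_or_gt with hC | hC
  · filter_upwards [eventually_ge_atTop 0] with ρ hρ
    exact iff_of_true (by nlinarith) hC
  · filter_upwards [eventually_gt_atTop (D / C)] with ρ hρ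
    exact iff_of_false (by rw [div_lt_iff₀ hC] at hρ; linarith) hC.not_gt

lemma eventually_max_zero_sub_one_lt_mul_iff {A B : ℝ} (hB : 0 < B) (hAB : A ≠ B) :
    ∀ᶠ ρ in atTop, (max 0 (ρ * A - 1) < ρ * B ↔ A < B) := by
  rcases hAB.lt_or_gt with hAB | hAB
  · filter_upwards [eventually_gt_atTop 0] with ρ hρ
    exact iff_of_true (max_lt (by positivity) (by nlinarith)) hAB
  · filter_upwards [eventually_ge_atTop (1 / (A - B))] with ρ hρ
    rw [div_le_iff₀ (sub_pos.2 hAB)] at hρ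
    exact iff_of_false (fun h => (le_max_right _ _).trans_lt h |>.not_ge (by linarith)) hAB.not_gt

lemma sq_one_add_mul_le_one_add_iff (β ρ y : ℝ) (hρ : 0 < ρ) (hy : 0 < y) :
    (1 + β * ρ * y) ^ 2 ≤ 1 + ρ * y ↔ ρ * (β ^ 2 * y) ≤ 1 - 2 * β := by
  have key : (1 + β * ρ * y) ^ 2 - (1 + ρ * y) =
      ρ * y * (ρ * (β ^ 2 * y)) - ρ * y * (1 - 2 * β) := by
    ring
  rw [← sub_nonpos, key, sub_nonpos, mul_le_mul_iff_of_pos_left (by positivity)]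

lemma one_add_div_mul_one_add_le_one_add_iff (β η ρ x y : ℝ) (hη : 0 < η) (hρ : 0 < ρ)
    (hx : 0 ≤ x) (hy : 0 < y) :
    (1 + β * ρ * y / (ρ / η * x + 1)) * (1 + β * ρ * y) ≤ 1 + ρ * y ↔
      ρ * (β ^ 2 * η * y - (1 - β) * x) ≤ (1 - 2 * β) * η := by
  have hc : 0 < ρ / η * x + 1 := by positivity
  have key : (1 + β * ρ * y / (ρ / η * x + 1)) * (1 + β * ρ * y) - (1 + ρ * y) =
      ρ * y / ((ρ / η * x + 1) * η) * (ρ * (β ^ 2 * η * y - (1 - β) * x)) -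
        ρ * y / ((ρ / η * x + 1) * η) * ((1 - 2 * β) * η) := by
    field_simp
    ring
  rw [← sub_nonpos, key, sub_nonpos, mul_le_mul_iff_of_pos_left (by positivity)]

/-- The region `E` of the paper for `ρ_n = ρ`, `ρ_m = ρ / η`; a point is `(|h_m|², |h_n|²)`. -/
def hsicNpaRegion (β η εm ρ : ℝ) : Set (ℝ × ℝ) :=
  {p | (β * ρ * p.2 ≤ max 0 (p.1 / (εm / (ρ / η)) - 1) ∧ (1 + β * ρ * p.2) ^ 2 ≤ 1 + ρ * p.2) ∨
    (β * ρ * p.2 > max 0 (p.1 / (εm / (ρ / η)) - 1) ∧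
      (1 + β * ρ * p.2 / ((ρ / η) * p.1 + 1)) * (1 + β * ρ * p.2) ≤ 1 + ρ * p.2)}

lemma measurableSet_hsicNpaRegion (β η εm ρ : ℝ) : MeasurableSet (hsicNpaRegion β η εm ρ) :=
  measurableSet_setOfPred.2 (by fun_prop)

lemma eventually_mem_hsicNpaRegion_iff {β η εm x y : ℝ} (hβ0 : 0 < β) (hβ1 : β < 1 / 2)
    (hη : 0 < η) (hεm : 0 < εm) (hx : 0 < x) (hy : 0 < y)
    (ha : y ≠ 1 / (β * εm * η) * x) (hb : y ≠ (1 - β) / (β ^ 2 * η) * x) :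
    ∀ᶠ ρ in atTop, ((x, y) ∈ hsicNpaRegion β η εm ρ ↔
      1 / (β * εm * η) * x < y ∧ y < (1 - β) / (β ^ 2 * η) * x) := by
  have ha' : 1 / (β * εm * η) * x = x / (εm * η) / β := by field_simp
  have hb' : (1 - β) / (β ^ 2 * η) * x = (1 - β) * x / (β ^ 2 * η) := by ring
  have hlow : 1 / (β * εm * η) * x < y ↔ x / (εm * η) < β * y := by
    rw [ha', div_lt_iff₀ hβ0, mul_comm y]
  have hup : y < (1 - β) / (β ^ 2 * η) * x ↔ β ^ 2 * η * y - (1 - β) * x < 0 := by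
    rw [hb', lt_div_iff₀ (by positivity), sub_neg, mul_comm y]
  have hA : x / (εm * η) ≠ β * y := fun h => ha (by rw [ha', h, mul_div_cancel_left₀ y hβ0.ne'])
  have hC : β ^ 2 * η * y - (1 - β) * x ≠ 0 := fun h => hb (by
    rw [hb', eq_div_iff (by positivity)]; linarith)
  filter_upwards [eventually_gt_atTop 0,
    eventually_mul_le_iff_neg (C := β ^ 2 * y) (D := 1 - 2 * β) (by linarith) (by positivity),
    eventually_max_zero_sub_one_lt_mul_iff (by positivity) hA,
    eventually_mul_le_iff_neg (D := (1 - 2 * β) * η) (by nlinarith) hC] with ρ hρ hsq hτ hsic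
  have hthr : x / (εm / (ρ / η)) = ρ * (x / (εm * η)) := by rw [div_div_eq_mul_div]; ring
  change (_ ∧ _) ∨ (_ ∧ _) ↔ _
  rw [hthr, sq_one_add_mul_le_one_add_iff β ρ y hρ hy,
    one_add_div_mul_one_add_le_one_add_iff β η ρ x y hη hρ hx.le hy, gt_iff_lt,
    show β * ρ * y = ρ * (β * y) by ring, hsq, hτ, hsic, hlow, hup]
  simp [(by positivity : 0 ≤ β ^ 2 * y).not_gt]

theorem hsic_npa_limit_large_eps
    (β η εm : ℝ) (hβ0 : 0 < β) (hβ1 : β < 1/2) (hη : 0 < η)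
    (hε : εm > β / (1 - β)) :
    Tendsto (fun ρ : ℝ =>
        ∫ x in Set.Ioi (0:ℝ), ∫ y in Set.Ioi (0:ℝ),
          (if (β * ρ * y ≤ max 0 (x / (εm / (ρ / η)) - 1)
                ∧ (1 + β * ρ * y) ^ 2 ≤ 1 + ρ * y)
              ∨ (β * ρ * y > max 0 (x / (εm / (ρ / η)) - 1)
                ∧ (1 + β * ρ * y / ((ρ / η) * x + 1)) * (1 + β * ρ * y)
                    ≤ 1 + ρ * y)
            then Real.exp (-(x + y)) else 0))
      atTop
      (nhds (1 / (1 + 1 / (β * εm * η)) - 1 / (1 + (1 - β) / (β ^ 2 * η)))) := by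
  have hεm : 0 < εm := (div_pos hβ0 (by linarith)).trans hε
  have hab : 1 / (β * εm * η) ≤ (1 - β) / (β ^ 2 * η) := by
    rw [gt_iff_lt, div_lt_iff₀ (by linarith)] at hε
    rw [div_le_div_iff₀ (by positivity) (by positivity)]
    nlinarith [mul_pos hβ0 hη]
  have hline (c : ℝ) : ∀ᵐ p ∂volume.restrict (Ioi (0:ℝ) ×ˢ Ioi (0:ℝ)), p.2 ≠ c * p.1 :=
    ae_restrict_of_ae (measure_eq_zero_iff_ae_notMem.1 (volume_setOf_snd_eq_mul_fst c))
  have hlim := tendsto_integral_indicator_of_ae_eventually_mem_iff (l := atTop)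
    (T := {p : ℝ × ℝ | 1 / (β * εm * η) * p.1 < p.2 ∧ p.2 < (1 - β) / (β ^ 2 * η) * p.1})
    integrableOn_exp_neg_add (measurableSet_hsicNpaRegion β η εm) (by
      filter_upwards [ae_restrict_mem (measurableSet_Ioi.prod measurableSet_Ioi),
        hline (1 / (β * εm * η)), hline ((1 - β) / (β ^ 2 * η))] with p ⟨hx, hy⟩ ha hb
      exact eventually_mem_hsicNpaRegion_iff hβ0 hβ1 hη hεm hx hy ha hb)
  rw [setIntegral_indicator_wedge_exp_neg_add (by positivity) hab] at hlim
  refine hlim.congr fun ρ => ?_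
  rw [Measure.volume_eq_prod, setIntegral_prod _
    (integrableOn_exp_neg_add.indicator (measurableSet_hsicNpaRegion β η εm ρ))]
  simp only [indicator_apply, hsicNpaRegion, mem_ofPred_eq]
end

section
/- Let 0 < β < 1/2, η > 0, and 0 < ε_m < β/(1-β). For ρ > 0 set ρ_n = ρ, ρ_m = ρ/η, α_m = ε_m/ρ_m, τ(x) = max{0, x/α_m − 1}, and let P̃(ρ) = ∫∫_E e^{-(x+y)} dy dx, where E ⊆ [0,∞)² is the union of {(x,y) : βρ_n y ≤ τ(x), (1+βρ_n y)² ≤ 1+ρ_n y} and {(x,y) : βρ_n y > τ(x), (1 + βρ_n y/(ρ_m x + 1))(1+βρ_n y) ≤ 1+ρ_n y}. Then P̃(ρ) tends to 0 as ρ → ∞. -/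
/-!
On the region `E` at least one of the two channel gains is `O(1/ρ)`: the first branch of
`E` forces `ρ y ≤ (1 - 2β)/β²`, and the second one forces `ρ_m x ≤ (1 - β)ε_m/(β - ε_m(1 - β))`,
a positive bound exactly because `ε_m < β/(1 - β)`. Since the joint density `e^{-(x+y)}` is at
most `e^{-x}` and at most `e^{-y}`, such a strip has probability `O(1/ρ)`.
-/

open MeasureTheory Real Filter Set

lemma le_of_one_add_mul_sq_le {β t : ℝ} (hβ : 0 < β) (ht : 0 < t)
    (h : (1 + β * t) ^ 2 ≤ 1 + t) : t ≤ (1 - 2 * β) / β ^ 2 := by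
  rw [le_div_iff₀ (by positivity)]
  nlinarith

lemma le_of_one_add_div_mul_one_add_le {β ε v s : ℝ} (hβ : 0 < β) (hε : 0 < ε)
    (hεβ : ε * (1 - β) < β) (hv : 0 ≤ v) (hs : 0 < s) (h₁ : v / ε - 1 < β * s)
    (h₂ : (1 + β * s / (v + 1)) * (1 + β * s) ≤ 1 + s) :
    v ≤ (1 - β) * ε / (β - ε * (1 - β)) := by
  have hv₁ : 0 < v + 1 := by linarith
  have hgain : β * (1 + β * s) ≤ (1 - β) * (v + 1) := by
    rw [one_add_div hv₁.ne', div_mul_eq_mul_div, div_le_iff₀ hv₁] at h₂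
    nlinarith
  have hthreshold : v < ε * (1 + β * s) := by
    rw [sub_lt_iff_lt_add', div_lt_iff₀ hε] at h₁
    linarith
  rw [le_div_iff₀ (by linarith)]
  nlinarith

lemma not_outage_of_lt {β η εm ρ x y : ℝ} (hβ0 : 0 < β) (hη : 0 < η) (hε0 : 0 < εm)
    (hεβ : εm * (1 - β) < β) (hρ : 0 < ρ) (hx : 0 < x) (hy : 0 < y)
    (hxK : η * ((1 - β) * εm / (β - εm * (1 - β))) / ρ < x)
    (hyc : (1 - 2 * β) / β ^ 2 / ρ < y) :
    ¬ ((β * ρ * y ≤ max 0 (x / (εm / (ρ / η)) - 1)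
          ∧ (1 + β * ρ * y) ^ 2 ≤ 1 + ρ * y)
        ∨ (β * ρ * y > max 0 (x / (εm / (ρ / η)) - 1)
          ∧ (1 + β * ρ * y / ((ρ / η) * x + 1)) * (1 + β * ρ * y) ≤ 1 + ρ * y)) := by
  rw [div_lt_iff₀ hρ] at hxK hyc
  rintro (⟨-, h⟩ | ⟨h₁, h₂⟩)
  · rw [mul_assoc] at h
    have := le_of_one_add_mul_sq_le hβ0 (mul_pos hρ hy) h
    linarith
  · rw [div_div_eq_mul_div, mul_comm x, gt_iff_lt, max_lt_iff] at h₁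
    rw [mul_assoc] at h₁ h₂
    have := le_of_one_add_div_mul_one_add_le hβ0 hε0 hεβ (by positivity) (mul_pos hρ hy) h₁.2 h₂
    rw [div_mul_eq_mul_div, div_le_iff₀ hη] at this
    linarith

lemma setIntegral_Ioi_le_mul_of_eq_zero_of_lt {g : ℝ → ℝ} {M a : ℝ} (ha : 0 ≤ a)
    (hg₀ : ∀ y ∈ Ioc 0 a, 0 ≤ g y) (hgM : ∀ y ∈ Ioc 0 a, g y ≤ M)
    (hg : ∀ y, a < y → g y = 0) :
    ∫ y in Ioi 0, g y ≤ M * a := by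
  have hsupp : ∫ y in Ioi 0, g y = ∫ y in Ioc 0 a, g y :=
    setIntegral_eq_of_subset_of_forall_sdiff_eq_zero measurableSet_Ioi Ioc_subset_Ioi_self
      fun y hy => hg y (not_le.1 fun hya => hy.2 ⟨hy.1, hya⟩)
  calc ∫ y in Ioi 0, g y ≤ ‖∫ y in Ioc 0 a, g y‖ := hsupp ▸ le_norm_self _
    _ ≤ M * volume.real (Ioc 0 a) :=
        norm_setIntegral_le_of_norm_le_const measure_Ioc_lt_top fun y hy => by
          rw [Real.norm_of_nonneg (hg₀ y hy)]; exact hgM y hy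
    _ = M * a := by rw [Real.volume_real_Ioc_of_le ha, sub_zero]

lemma setIntegral_Ioi_le_exp_neg {f : ℝ → ℝ} {x : ℝ} (hf₀ : ∀ y, 0 ≤ f y)
    (hf : ∀ y, f y ≤ exp (-(x + y))) :
    ∫ y in Ioi 0, f y ≤ exp (-x) := by
  simp_rw [neg_add, exp_add] at hf
  calc ∫ y in Ioi 0, f y ≤ ∫ y in Ioi 0, exp (-x) * exp (-y) :=
        integral_mono_of_nonneg (ae_of_all _ hf₀) ((integrableOn_exp_neg_Ioi 0).const_mul _)
          (ae_of_all _ hf)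
    _ = exp (-x) := by rw [integral_const_mul, integral_exp_neg_Ioi_zero, mul_one]

theorem integral_Ioi_Ioi_le_add_of_eq_zero {f : ℝ → ℝ → ℝ} {a b : ℝ} (ha : 0 ≤ a) (hb : 0 ≤ b)
    (hf₀ : ∀ x y, 0 ≤ f x y) (hf : ∀ x y, f x y ≤ exp (-(x + y)))
    (hf_zero : ∀ x > 0, ∀ y > 0, b < x → a < y → f x y = 0) :
    ∫ x in Ioi 0, ∫ y in Ioi 0, f x y ≤ a + b := by
  set bound : ℝ → ℝ := fun x => (Iic b).indicator 1 x + a * exp (-x)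
  have hinner : ∀ x ∈ Ioi (0 : ℝ), ∫ y in Ioi 0, f x y ≤ bound x := by
    intro x hx
    by_cases hxb : x ≤ b
    · have : exp (-x) ≤ 1 := exp_le_one_iff.2 (by linarith [mem_Ioi.1 hx])
      have := setIntegral_Ioi_le_exp_neg (hf₀ x) (hf x)
      simp only [bound, indicator_of_mem (mem_Iic.2 hxb), Pi.one_apply]
      linarith [mul_nonneg ha (exp_pos (-x)).le]
    · simp only [bound, indicator_of_notMem (mt mem_Iic.1 hxb), zero_add]
      rw [mul_comm]
      refine setIntegral_Ioi_le_mul_of_eq_zero_of_lt ha (fun y _ => hf₀ x y)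
        (fun y hy => (hf x y).trans (exp_le_exp.2 (by linarith [hy.1]))) fun y hy => ?_
      exact hf_zero x hx y (ha.trans_lt hy) (not_le.1 hxb) hy
  have hindicator : IntegrableOn ((Iic b).indicator (1 : ℝ → ℝ)) (Ioi 0) := by
    rw [IntegrableOn, integrable_indicator_iff measurableSet_Iic, IntegrableOn,
      Measure.restrict_restrict measurableSet_Iic, Iic_inter_Ioi]
    exact integrableOn_const measure_Ioc_lt_top.ne
  have hbound_int : IntegrableOn bound (Ioi 0) :=
    hindicator.add ((integrableOn_exp_neg_Ioi 0).const_mul _)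
  calc ∫ x in Ioi 0, ∫ y in Ioi 0, f x y ≤ ∫ x in Ioi 0, bound x :=
        integral_mono_of_nonneg (ae_of_all _ fun x => setIntegral_nonneg measurableSet_Ioi
          fun y _ => hf₀ x y) hbound_int (ae_restrict_of_forall_mem measurableSet_Ioi hinner)
    _ = a + b := by
      rw [integral_add hindicator ((integrableOn_exp_neg_Ioi 0).const_mul _),
        setIntegral_indicator measurableSet_Iic, Ioi_inter_Iic, integral_const_mul,
        integral_exp_neg_Ioi_zero]
      simp [hb, add_comm]

theorem hsic_npa_limit_small_eps
    (β η εm : ℝ) (hβ0 : 0 < β) (hβ1 : β < 1/2) (hη : 0 < η)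
    (hε0 : 0 < εm) (hε : εm < β / (1 - β)) :
    Tendsto (fun ρ : ℝ =>
        ∫ x in Set.Ioi (0:ℝ), ∫ y in Set.Ioi (0:ℝ),
          (if (β * ρ * y ≤ max 0 (x / (εm / (ρ / η)) - 1)
                ∧ (1 + β * ρ * y) ^ 2 ≤ 1 + ρ * y)
              ∨ (β * ρ * y > max 0 (x / (εm / (ρ / η)) - 1)
                ∧ (1 + β * ρ * y / ((ρ / η) * x + 1)) * (1 + β * ρ * y)
                    ≤ 1 + ρ * y)
            then Real.exp (-(x + y)) else 0))
      atTop (nhds 0) := by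
  have hεβ : εm * (1 - β) < β := (lt_div_iff₀ (by linarith)).1 hε
  set c := (1 - 2 * β) / β ^ 2
  set K := η * ((1 - β) * εm / (β - εm * (1 - β)))
  have hc : 0 < c := div_pos (by linarith) (by positivity)
  have hK : 0 < K := mul_pos hη (div_pos (by nlinarith) (by linarith))
  refine squeeze_zero' (g := fun ρ => (c + K) / ρ) (Eventually.of_forall fun ρ => ?_) ?_
    (tendsto_const_nhds.div_atTop tendsto_id)
  · refine setIntegral_nonneg measurableSet_Ioi fun x _ => ?_
    exact setIntegral_nonneg measurableSet_Ioi fun y _ => by split_ifs <;> positivity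
  filter_upwards [eventually_gt_atTop 0] with ρ hρ
  rw [add_div]
  refine integral_Ioi_Ioi_le_add_of_eq_zero (by positivity) (by positivity)
    (fun x y => by split_ifs <;> positivity) (fun x y => ?_) fun x hx y hy hxK hyc => ?_
  · split_ifs
    exacts [le_rfl, (exp_pos _).le]
  · exact if_neg (not_outage_of_lt hβ0 hη hε0 hεβ hρ hx hy hxK hyc)
end

section
/- Let 0 < β < 1/2, ρ_m > 0, α_m > 0, and define f(x) = x² + (1/ρ_m − α_m/β)·x − (1-β)α_m/(βρ_m). Then f(α_m) < 0, f((1-β)α_m/β) < 0, and f(α_m/β) > 0; consequently f has exactly one root x₂ in the interval ((1-β)α_m/β, α_m/β), and f(x) < 0 for all x in [α_m, x₂) while f(x) > 0 for all x in (x₂, α_m/β]. -/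
/-!
The quadratic `f` is monic with negative constant term `-(1-β)αm/(βρm)`, so it factors as
`(x - r)(x - s)` with `s < 0 < r`. On the positive half-line the sign of `f x` is therefore that of
`x - r`, and `r` is the root `x₂`. The evaluations `f((1-β)αm/β) = -(1-β)αm²/β < 0` and
`f(αm/β) = αm/ρm > 0` place `r` strictly between these two points, and `β < 1/2` gives
`αm < (1-β)αm/β`, so `f αm < 0` as well.
-/

/-- The roots are `(-b ± √(b² + 4c))/2`; the product of the roots is `-c < 0`. -/
theorem exists_factor_sq_add_mul_sub {b c : ℝ} (hc : 0 < c) :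
    ∃ r s : ℝ, s < 0 ∧ 0 < r ∧ ∀ x, x ^ 2 + b * x - c = (x - r) * (x - s) := by
  set d := √(b ^ 2 + 4 * c)
  have hd : d ^ 2 = b ^ 2 + 4 * c := Real.sq_sqrt (by positivity)
  have hbd : |b| < d := Real.lt_sqrt_of_sq_lt (by rw [sq_abs]; linarith)
  refine ⟨(-b + d) / 2, (-b - d) / 2, ?_, ?_, fun x => ?_⟩
  · linarith [neg_abs_le b]
  · linarith [le_abs_self b]
  · linear_combination (1 / 4 : ℝ) * hd

section SignOfFactored

variable {r s x : ℝ}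

theorem mul_sub_neg_iff_lt (hsx : s < x) : (x - r) * (x - s) < 0 ↔ x < r := by
  rw [← zero_mul (x - s), mul_lt_mul_iff_left₀ (sub_pos.mpr hsx), sub_neg]

theorem mul_sub_pos_iff_lt (hsx : s < x) : 0 < (x - r) * (x - s) ↔ r < x := by
  rw [mul_pos_iff_of_pos_right (sub_pos.mpr hsx), sub_pos]

theorem mul_sub_eq_zero_iff_eq (hsx : s < x) : (x - r) * (x - s) = 0 ↔ x = r := by
  rw [mul_eq_zero, sub_eq_zero, sub_eq_zero]
  exact or_iff_left hsx.ne'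

end SignOfFactored

section Evaluations

variable {β ρ α : ℝ}

theorem hsic_quadratic_eval_mul_div (hβ : β ≠ 0) (hρ : ρ ≠ 0) :
    ((1 - β) * α / β) ^ 2 + (1 / ρ - α / β) * ((1 - β) * α / β) - (1 - β) * α / (β * ρ)
      = -((1 - β) * α ^ 2 / β) := by
  field_simp
  ring

theorem hsic_quadratic_eval_div (hβ : β ≠ 0) (hρ : ρ ≠ 0) :
    (α / β) ^ 2 + (1 / ρ - α / β) * (α / β) - (1 - β) * α / (β * ρ) = α / ρ := by
  field_simp
  ring

end Evaluations

theorem hsic_pa_quadratic_root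
    (β ρm αm : ℝ) (hβ0 : 0 < β) (hβ1 : β < 1/2)
    (hρm : 0 < ρm) (hαm : 0 < αm)
    (f : ℝ → ℝ)
    (hf : ∀ x, f x = x ^ 2 + (1 / ρm - αm / β) * x - (1 - β) * αm / (β * ρm)) :
    f αm < 0 ∧ f ((1 - β) * αm / β) < 0 ∧ f (αm / β) > 0 ∧
    ∃ x₂ ∈ Set.Ioo ((1 - β) * αm / β) (αm / β),
      f x₂ = 0 ∧
      (∀ x ∈ Set.Ioo ((1 - β) * αm / β) (αm / β), f x = 0 → x = x₂) ∧
      (∀ x ∈ Set.Ico αm x₂, f x < 0) ∧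
      (∀ x ∈ Set.Ioc x₂ (αm / β), f x > 0) := by
  have hβ' : 0 < 1 - β := by linarith
  obtain ⟨r, s, hs, hr, hfac⟩ :=
    exists_factor_sq_add_mul_sub (b := 1 / ρm - αm / β)
      (show 0 < (1 - β) * αm / (β * ρm) by positivity)
  have hneg (x : ℝ) (hx : 0 < x) : f x < 0 ↔ x < r := by
    rw [hf, hfac]; exact mul_sub_neg_iff_lt (hs.trans hx)
  have hpos (x : ℝ) (hx : 0 < x) : f x > 0 ↔ r < x := by
    rw [hf, hfac]; exact mul_sub_pos_iff_lt (hs.trans hx)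
  have hfy : f ((1 - β) * αm / β) < 0 := by
    rw [hf, hsic_quadratic_eval_mul_div hβ0.ne' hρm.ne', neg_lt_zero]; positivity
  have hfz : f (αm / β) > 0 := by
    rw [hf, hsic_quadratic_eval_div hβ0.ne' hρm.ne']; positivity
  have hαy : αm < (1 - β) * αm / β := by
    rw [lt_div_iff₀ hβ0]; nlinarith
  have hyr : (1 - β) * αm / β < r := (hneg _ (by positivity)).mp hfy
  have hrz : r < αm / β := (hpos _ (by positivity)).mp hfz
  refine ⟨(hneg αm hαm).mpr (hαy.trans hyr), hfy, hfz, r, ⟨hyr, hrz⟩, ?_, ?_, ?_, ?_⟩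
  · rw [hf, hfac]; ring
  · intro x hx hfx
    rw [hf, hfac] at hfx
    exact (mul_sub_eq_zero_iff_eq (hs.trans (by positivity) |>.trans hx.1)).mp hfx
  · exact fun x hx => (hneg x (hαm.trans_le hx.1)).mpr hx.2
  · exact fun x hx => (hpos x (hr.trans hx.1)).mpr hx.1
end

section
/- Let 0 < β < 1/2, η > 0, and ε_m > 0. For ρ > 0 set ρ_n = ρ, ρ_m = ρ/η, α_m = ε_m/ρ_m, τ(x) = max{0, x/α_m − 1}, and let P̂(ρ) = ∫∫_Ê e^{-(x+y)} dy dx, where Ê ⊆ [0,∞)² is the union of {(x,y) : βρ_n y ≤ τ(x), (1+βρ_n y)² ≤ 1+ρ_n y} and {(x,y) : βρ_n y > τ(x), max{1 + βρ_n y/(ρ_m x + 1), 1 + τ(x)}·(1+βρ_n y) ≤ 1+ρ_n y}. Then P̂(ρ) tends to 0 as ρ → ∞. -/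
/-!
On `Ê` one has `β³ ρ y ≤ β + ε_m`. On the first piece, `(1 + βρy)² ≤ 1 + ρy` forces
`β² ρy ≤ 1 - 2β`. On the second, the Case-1 rate condition gives
`β (1 + βρy) ≤ (1 - β)(1 + ρ_m x)`, while the Case-2 condition
`(1 + τ(x))(1 + βρy) ≤ 1 + ρy` and `ρ_m x ≤ ε_m (1 + τ(x))` bound `ρ_m x (1 + βρy)` by
`ε_m (1 + ρy)`; multiplying the first by `β (1 + βρy)` and inserting the second gives
`β² (1 + βρy) ≤ (1 - β)(β + ε_m)`.
So `Ê` lies in the strip `y ≤ C / ρ` with `C = (β + ε_m) / β³`, whose `e^{-(x+y)}`-mass is at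
most `C / ρ`.
-/

open MeasureTheory Real Filter

noncomputable def hsicThreshold (εm ρm x : ℝ) : ℝ := max 0 (x / (εm / ρm) - 1)

/-- `(x, y) ∈ Ê` for `ρ_n = ρ`, `ρ_m = ρ / η`, with `x = |h_m|²` and `y = |h_n|²`. -/
def HsicPAFails (β η εm ρ x y : ℝ) : Prop :=
  (β * ρ * y ≤ hsicThreshold εm (ρ / η) x ∧ (1 + β * ρ * y) ^ 2 ≤ 1 + ρ * y) ∨
    (β * ρ * y > hsicThreshold εm (ρ / η) x ∧
      max (1 + β * ρ * y / ((ρ / η) * x + 1)) (1 + hsicThreshold εm (ρ / η) x)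
        * (1 + β * ρ * y) ≤ 1 + ρ * y)

lemma le_mul_one_add_hsicThreshold {εm : ℝ} (hε : 0 < εm) (ρm x : ℝ) :
    ρm * x ≤ εm * (1 + hsicThreshold εm ρm x) := by
  have h : x / (εm / ρm) - 1 ≤ hsicThreshold εm ρm x := le_max_right _ _
  rw [div_div_eq_mul_div, div_sub_one hε.ne', div_le_iff₀ hε] at h
  linarith

lemma sq_mul_le_one_sub_two_mul {β q : ℝ} (hq : 0 < q)
    (h : (1 + β * q) ^ 2 ≤ 1 + q) : β ^ 2 * q ≤ 1 - 2 * β := by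
  nlinarith

lemma pow_three_mul_le_add {β ε q u : ℝ} (hβ0 : 0 < β) (hβ1 : β ≤ 1)
    (hε : 0 ≤ ε) (hq : 0 < q) (hu : 0 ≤ u)
    (hrate : (1 + β * q / (u + 1)) * (1 + β * q) ≤ 1 + q)
    (hthreshold : u * (1 + β * q) ≤ ε * (1 + q)) :
    β ^ 3 * q ≤ β + ε := by
  have hD : 0 < u + 1 := by linarith
  have hs : 0 < 1 + β * q := by positivity
  rw [one_add_div hD.ne', div_mul_eq_mul_div, div_le_iff₀ hD] at hrate
  have hD_lower : β * (1 + β * q) ≤ (1 - β) * (u + 1) :=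
    le_of_mul_le_mul_left (by nlinarith) hq
  have hsq_le : β ^ 2 * (1 + β * q) ^ 2 ≤ (1 - β) * (β + ε) * (1 + β * q) := by
    nlinarith [mul_le_mul_of_nonneg_right hD_lower (by positivity : 0 ≤ β * (1 + β * q)),
      mul_le_mul_of_nonneg_left hthreshold (by nlinarith : 0 ≤ (1 - β) * β),
      mul_nonneg (mul_nonneg (sub_nonneg.2 hβ1) hε) (sub_nonneg.2 hβ1)]
  have hlin_le : β ^ 2 * (1 + β * q) ≤ (1 - β) * (β + ε) :=
    le_of_mul_le_mul_right (by nlinarith) hs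
  nlinarith

lemma HsicPAFails.pow_three_mul_le {β η εm ρ x y : ℝ} (hβ0 : 0 < β) (hβ1 : β ≤ 1)
    (hη : 0 < η) (hε : 0 < εm) (hρ : 0 < ρ) (hx : 0 ≤ x) (hy : 0 < y)
    (h : HsicPAFails β η εm ρ x y) : β ^ 3 * (ρ * y) ≤ β + εm := by
  have hq : 0 < ρ * y := by positivity
  rcases h with ⟨-, hrate⟩ | ⟨-, hrate⟩
  · have := sq_mul_le_one_sub_two_mul hq (by rwa [← mul_assoc])
    nlinarith
  · rw [mul_assoc β ρ y] at hrate
    have hs : 0 < 1 + β * (ρ * y) := by positivity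
    refine pow_three_mul_le_add hβ0 hβ1 hε.le hq (by positivity : 0 ≤ ρ / η * x) ?_ ?_
    · exact (mul_le_mul_of_nonneg_right (le_max_left _ _) hs.le).trans hrate
    · calc ρ / η * x * (1 + β * (ρ * y))
          ≤ εm * (1 + hsicThreshold εm (ρ / η) x) * (1 + β * (ρ * y)) :=
            mul_le_mul_of_nonneg_right (le_mul_one_add_hsicThreshold hε _ x) hs.le
        _ ≤ εm * (1 + ρ * y) := by
            rw [mul_assoc]
            exact mul_le_mul_of_nonneg_left
              ((mul_le_mul_of_nonneg_right (le_max_right _ _) hs.le).trans hrate) hε.le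

lemma integral_ite_exp_nonneg (P : ℝ → ℝ → Prop) [∀ x y, Decidable (P x y)] :
    0 ≤ ∫ x in Set.Ioi (0:ℝ), ∫ y in Set.Ioi (0:ℝ), (if P x y then exp (-(x + y)) else 0) :=
  integral_nonneg fun _ => integral_nonneg fun _ => by split_ifs <;> positivity

lemma setIntegral_Ioi_ite_exp_le {P : ℝ → Prop} [DecidablePred P] {c : ℝ} (x : ℝ)
    (hc : 0 ≤ c) (hP : ∀ y > 0, P y → y ≤ c) :
    ∫ y in Set.Ioi (0:ℝ), (if P y then exp (-(x + y)) else 0) ≤ exp (-x) * c := by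
  calc ∫ y in Set.Ioi (0:ℝ), (if P y then exp (-(x + y)) else 0)
      ≤ ∫ y in Set.Ioi (0:ℝ), (Set.Ioc 0 c).indicator (fun _ => exp (-x)) y := by
        refine integral_mono_of_nonneg
          (.of_forall fun y => show 0 ≤ ite _ _ _ by split_ifs <;> positivity)
          ((integrable_indicator_iff measurableSet_Ioc).2
            (integrableOn_const measure_Ioc_lt_top.ne)) ?_
        filter_upwards [self_mem_ae_restrict measurableSet_Ioi] with y (hy : 0 < y)
        split_ifs with h
        · rw [Set.indicator_of_mem (Set.mem_Ioc.2 ⟨hy, hP y hy h⟩)]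
          exact exp_le_exp.2 (by linarith)
        · exact Set.indicator_nonneg (fun _ _ => (exp_pos _).le) _
    _ = exp (-x) * c := by
        rw [setIntegral_indicator measurableSet_Ioc,
          Set.inter_eq_self_of_subset_right Set.Ioc_subset_Ioi_self, setIntegral_const,
          Real.volume_real_Ioc_of_le hc, sub_zero, smul_eq_mul, mul_comm]

lemma integral_ite_exp_le {P : ℝ → ℝ → Prop} [∀ x y, Decidable (P x y)] {c : ℝ}
    (hc : 0 ≤ c) (hP : ∀ x > 0, ∀ y > 0, P x y → y ≤ c) :
    ∫ x in Set.Ioi (0:ℝ), ∫ y in Set.Ioi (0:ℝ), (if P x y then exp (-(x + y)) else 0) ≤ c :=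
  calc ∫ x in Set.Ioi (0:ℝ), ∫ y in Set.Ioi (0:ℝ), (if P x y then exp (-(x + y)) else 0)
      ≤ ∫ x in Set.Ioi (0:ℝ), exp (-x) * c := by
        refine integral_mono_of_nonneg
          (.of_forall fun x => integral_nonneg fun y => by split_ifs <;> positivity)
          ((integrableOn_exp_neg_Ioi 0).mul_const c) ?_
        filter_upwards [self_mem_ae_restrict measurableSet_Ioi] with x (hx : 0 < x)
        exact setIntegral_Ioi_ite_exp_le x hc (hP x hx)
    _ = c := by rw [integral_mul_const, integral_exp_neg_Ioi_zero, one_mul]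

theorem hsic_pa_limit
    (β η εm : ℝ) (hβ0 : 0 < β) (hβ1 : β < 1/2) (hη : 0 < η) (hε : 0 < εm) :
    Tendsto (fun ρ : ℝ =>
        ∫ x in Set.Ioi (0:ℝ), ∫ y in Set.Ioi (0:ℝ),
          (if (β * ρ * y ≤ max 0 (x / (εm / (ρ / η)) - 1)
                ∧ (1 + β * ρ * y) ^ 2 ≤ 1 + ρ * y)
              ∨ (β * ρ * y > max 0 (x / (εm / (ρ / η)) - 1)
                ∧ max (1 + β * ρ * y / ((ρ / η) * x + 1))
                      (1 + max 0 (x / (εm / (ρ / η)) - 1))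
                    * (1 + β * ρ * y) ≤ 1 + ρ * y)
            then Real.exp (-(x + y)) else 0))
      atTop (nhds 0) := by
  set C := (β + εm) / β ^ 3
  have hC : 0 ≤ C := by positivity
  have hfails_le (ρ : ℝ) (hρ : 0 < ρ) (x : ℝ) (hx : 0 < x) (y : ℝ) (hy : 0 < y)
      (h : HsicPAFails β η εm ρ x y) : y ≤ C / ρ := by
    rw [le_div_iff₀ hρ, le_div_iff₀ (by positivity), mul_comm y]
    linarith [h.pow_three_mul_le hβ0 (by linarith) hη hε hρ hx.le hy]
  refine squeeze_zero' (.of_forall fun ρ => integral_ite_exp_nonneg _) ?_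
    (tendsto_const_nhds (x := C) |>.div_atTop tendsto_id)
  filter_upwards [eventually_gt_atTop 0] with ρ hρ
  exact integral_ite_exp_le (div_nonneg hC hρ.le) (hfails_le ρ hρ)
end
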